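/- arXiv:2310.13881 — 2 statements merged into one kernel-verified Lean document; each statement's English description precedes it below -/
import Mathlib

section
/- Let F be a finite field with q elements and a₁, b₁, a₂, b₂, a₃ nonzero elements of F; set b₃ := a₃a₁⁻¹b₁. Let V₁, V₂ be random variables with values in finite sets and X₁, X₂, N₁, N₂, N₁' be F-valued random variables such that the five blocks (V₁,X₁), (V₂,X₂), N₁, N₂, N₁' are mutually independent. Define Y₁ := a₁X₁ + b₁X₂ + N₁, Y₂ := a₂X₁ + b₂X₂ + N₂, N₃ := a₃a₁⁻¹N₁ + N₁', and Z := a₃X₁ + b₃X₂ + N₃ (so that Z = a₃a₁⁻¹Y₁ + N₁'). Then I(Y₂; V₁ | V₂) + I(Y₁; V₂ | V₁) − I(V₁, V₂; Z) ≤ log q + H(N₃) − H(N₁) − H(N₂). -/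
open scoped BigOperators Classical

/-- Shannon entropy `H(P) = −∑ P log P` of a pmf on a finite set. -/
noncomputable def Hent {α : Type*} [Fintype α] (P : α → ℝ) : ℝ := ∑ a, Real.negMulLog (P a)

/-- Pushforward pmf of `P` along `f`. -/
noncomputable def pushf {Ω α : Type*} [Fintype Ω] (P : Ω → ℝ) (f : Ω → α) : α → ℝ :=
  fun a => ∑ ω, if f ω = a then P ω else 0

/-- Mutual information `I(X;Y) = H(X) + H(Y) − H(X,Y)` of a joint pmf. -/
noncomputable def miInfo {α β : Type*} [Fintype α] [Fintype β] (P : α × β → ℝ) : ℝ :=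
  Hent (fun a => ∑ b, P (a, b)) + Hent (fun b => ∑ a, P (a, b)) - Hent P

/-- Conditional mutual information `I(X;Y|Z)` of a joint pmf on `α × β × γ`. -/
noncomputable def cmiInfo {α β γ : Type*} [Fintype α] [Fintype β] [Fintype γ]
    (P : α × β × γ → ℝ) : ℝ :=
  Hent (fun p : α × γ => ∑ b, P (p.1, b, p.2)) + Hent (fun p : β × γ => ∑ a, P (a, p.1, p.2))
    - Hent (fun c : γ => ∑ a, ∑ b, P (a, b, c)) - Hent P

/-- A probability mass function on a finite set. -/
def IsPMF {α : Type*} [Fintype α] (P : α → ℝ) : Prop := (∀ a, 0 ≤ P a) ∧ ∑ a, P a = 1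

/-- Joint pmf of the five mutually independent blocks `((V₁,X₁),(V₂,X₂),N₁,N₂,N₁')`. -/
noncomputable def blockPMF {S1 S2 F : Type*} [Fintype S1] [Fintype S2] [Fintype F]
    (p12 : S1 × F → ℝ) (p34 : S2 × F → ℝ) (q1 q2 q1' : F → ℝ) :
    (S1 × F) × (S2 × F) × F × F × F → ℝ :=
  fun ω => p12 ω.1 * p34 ω.2.1 * q1 ω.2.2.1 * q2 ω.2.2.2.1 * q1' ω.2.2.2.2

set_option linter.unusedSectionVars false
set_option linter.unusedVariables false

section InfoTheoryAux

variable {Ω α β γ : Type*} [Fintype Ω] [Fintype α] [Fintype β] [Fintype γ]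

lemma pushf_nonneg (P : Ω → ℝ) (hP : ∀ ω, 0 ≤ P ω) (f : Ω → α) (a : α) : 0 ≤ pushf P f a := by
  apply Finset.sum_nonneg; intro ω _; split <;> simp [hP ω]

lemma sum_pushf (P : Ω → ℝ) (f : Ω → α) : ∑ a, pushf P f a = ∑ ω, P ω := by
  unfold pushf
  rw [Finset.sum_comm]
  refine Finset.sum_congr rfl fun ω _ => ?_
  simp

lemma IsPMF.pushf {P : Ω → ℝ} (hP : IsPMF P) (f : Ω → α) : IsPMF (pushf P f) :=
  ⟨pushf_nonneg P hP.1 f, by rw [sum_pushf]; exact hP.2⟩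

lemma pushf_comp (P : Ω → ℝ) (f : Ω → α) (g : α → β) :
    pushf (pushf P f) g = pushf P (g ∘ f) := by
  funext b
  unfold pushf
  have step : ∀ a : α, (if g a = b then ∑ ω, if f ω = a then P ω else 0 else 0)
      = ∑ ω, if f ω = a then (if g a = b then P ω else 0) else 0 := by
    intro a
    split_ifs with h
    · exact Finset.sum_congr rfl fun ω _ => by split_ifs with h2 <;> simp [h]
    · symm; apply Finset.sum_eq_zero; intro ω _; split_ifs with h2 <;> simp [h]
  simp only [step]
  rw [Finset.sum_comm]
  refine Finset.sum_congr rfl fun ω _ => ?_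
  rw [Finset.sum_ite_eq Finset.univ (f ω) (fun a => if g a = b then P ω else 0)]
  simp [Function.comp]

lemma pushf_equiv {Ω' : Type*} [Fintype Ω'] (P : Ω → ℝ) (f : Ω → α) (e : Ω' ≃ Ω) :
    pushf P f = pushf (fun ω' => P (e ω')) (fun ω' => f (e ω')) := by
  funext a
  unfold pushf
  exact (Equiv.sum_comp e (fun ω => if f ω = a then P ω else 0)).symm

lemma pushf_apply_of_inj (Q : Ω → ℝ) {σ : Ω → α} (hσ : Function.Injective σ) (ω : Ω) :
    pushf Q σ (σ ω) = Q ω := by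
  unfold pushf
  have : ∀ ω' : Ω, (if σ ω' = σ ω then Q ω' else 0) = if ω' = ω then Q ω' else 0 := by
    intro ω'; simp [hσ.eq_iff]
  simp only [this]
  simp

lemma Hent_pushf_inj (Q : Ω → ℝ) {σ : Ω → α} (hσ : Function.Injective σ) :
    Hent (pushf Q σ) = Hent Q := by
  unfold Hent
  rw [← Finset.sum_subset (Finset.subset_univ (Finset.univ.image σ))]
  · rw [Finset.sum_image (fun x _ y _ h => hσ h)]
    exact Finset.sum_congr rfl fun ω _ => by rw [pushf_apply_of_inj Q hσ]
  · intro a _ ha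
    have : pushf Q σ a = 0 := by
      apply Finset.sum_eq_zero; intro ω _
      split_ifs with h
      · exact absurd (Finset.mem_image.mpr ⟨ω, Finset.mem_univ ω, h⟩) ha
      · rfl
    simp [this, Real.negMulLog]

/-- If `g = σ ∘ f` with `σ` injective, the entropies of the pushforwards agree. -/
lemma h_inj (P : Ω → ℝ) (f : Ω → α) {σ : α → β} (hσ : Function.Injective σ) (g : Ω → β)
    (hg : ∀ ω, g ω = σ (f ω)) :
    Hent (pushf P g) = Hent (pushf P f) := by
  have : g = σ ∘ f := funext hg
  rw [this, ← pushf_comp, Hent_pushf_inj _ hσ]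

/-- Gibbs' inequality core. -/
lemma gibbs (p q : α → ℝ) (hp : ∀ a, 0 ≤ p a) (hq : ∀ a, 0 ≤ q a)
    (habs : ∀ a, q a = 0 → p a = 0) (hq1 : ∑ a, q a ≤ 1) (hp1 : ∑ a, p a = 1) :
    ∑ a, p a * (Real.log (q a) - Real.log (p a)) ≤ 0 := by
  have key : ∀ a, p a * (Real.log (q a) - Real.log (p a)) ≤ q a - p a := by
    intro a
    rcases eq_or_lt_of_le (hp a) with h | h
    · simp [← h, hq a]
    · have hqa : 0 < q a := by
        rcases eq_or_lt_of_le (hq a) with h2 | h2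
        · exact absurd (habs a h2.symm) (by linarith)
        · exact h2
      have hlog : Real.log (q a) - Real.log (p a) = Real.log (q a / p a) :=
        (Real.log_div (ne_of_gt hqa) (ne_of_gt h)).symm
      have := Real.log_le_sub_one_of_pos (div_pos hqa h)
      rw [hlog]
      calc p a * Real.log (q a / p a) ≤ p a * (q a / p a - 1) := by
            exact mul_le_mul_of_nonneg_left this (le_of_lt h)
        _ = q a - p a := by field_simp
  calc ∑ a, p a * (Real.log (q a) - Real.log (p a)) ≤ ∑ a, (q a - p a) :=
        Finset.sum_le_sum fun a _ => key a
    _ = (∑ a, q a) - 1 := by rw [Finset.sum_sub_distrib, hp1]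
    _ ≤ 0 := by linarith

/-- Entropy is at most `log` of the cardinality. -/
lemma Hent_le_log (P : α → ℝ) (hP : IsPMF P) : Hent P ≤ Real.log (Fintype.card α) := by
  have hne : Nonempty α := by
    by_contra h
    simp only [not_nonempty_iff] at h
    have := hP.2
    rw [Finset.sum_of_isEmpty] at this
    norm_num at this
  have hcard : (0:ℝ) < Fintype.card α := by
    have := Fintype.card_pos_iff.mpr hne
    exact_mod_cast this
  have := gibbs P (fun _ => (Fintype.card α : ℝ)⁻¹) hP.1 (fun _ => by positivity)
    (fun a h => absurd h (by positivity)) (by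
      rw [Finset.sum_const, Finset.card_univ, nsmul_eq_mul]
      rw [mul_inv_cancel₀ (ne_of_gt hcard)]) hP.2
  have hlog : ∀ a, P a * (Real.log (Fintype.card α : ℝ)⁻¹ - Real.log (P a))
      = Real.negMulLog (P a) - P a * Real.log (Fintype.card α) := by
    intro a
    rw [Real.log_inv, Real.negMulLog]
    ring
  rw [Finset.sum_congr rfl (fun a _ => hlog a), Finset.sum_sub_distrib,
    ← Finset.sum_mul, hP.2] at this
  unfold Hent
  linarith

lemma Hent_eq (P : α → ℝ) : Hent P = -∑ a, P a * Real.log (P a) := by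
  simp [Hent, Real.negMulLog, Finset.sum_neg_distrib]

/-- Subadditivity of entropy for a joint pmf. -/
lemma subadd_pmf (P : α × β → ℝ) (hP : IsPMF P) :
    Hent P ≤ Hent (fun a => ∑ b, P (a, b)) + Hent (fun b => ∑ a, P (a, b)) := by
  set A : α → ℝ := fun a => ∑ b, P (a, b) with hA
  set B : β → ℝ := fun b => ∑ a, P (a, b) with hB
  have hPn := hP.1
  have hAn : ∀ a, 0 ≤ A a := fun a => Finset.sum_nonneg fun b _ => hPn _
  have hBn : ∀ b, 0 ≤ B b := fun b => Finset.sum_nonneg fun a _ => hPn _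
  have hPA : ∀ x : α × β, P x ≤ A x.1 := by
    intro x
    exact Finset.single_le_sum (fun b _ => hPn (x.1, b)) (Finset.mem_univ x.2)
  have hPB : ∀ x : α × β, P x ≤ B x.2 := by
    intro x
    exact Finset.single_le_sum (fun a _ => hPn (a, x.2)) (Finset.mem_univ x.1)
  have hsum1 : ∑ x : α × β, P x = 1 := hP.2
  have hAs : ∑ a, A a = 1 := by
    rw [hA, ← Fintype.sum_prod_type]; exact hsum1
  have hBs : ∑ b, B b = 1 := by
    rw [hB]
    rw [Finset.sum_comm]
    rw [← Fintype.sum_prod_type]; exact hsum1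
  have hqs : ∑ x : α × β, A x.1 * B x.2 ≤ 1 := by
    rw [Fintype.sum_prod_type]
    have : ∀ a, ∑ b, A a * B b = A a := by
      intro a; rw [← Finset.mul_sum, hBs, mul_one]
    rw [Finset.sum_congr rfl fun a _ => this a, hAs]
  have hG := gibbs P (fun x => A x.1 * B x.2) hPn (fun x => mul_nonneg (hAn _) (hBn _))
    (by
      intro x hx
      rcases mul_eq_zero.mp hx with h | h
      · have := hPA x; have := hPn x; linarith [hPA x, (h ▸ hPA x : P x ≤ 0)]
      · linarith [hPn x, (h ▸ hPB x : P x ≤ 0)]) hqs hsum1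
  have hsplit : ∀ x : α × β, P x * (Real.log (A x.1 * B x.2) - Real.log (P x))
      = P x * Real.log (A x.1) + P x * Real.log (B x.2) - P x * Real.log (P x) := by
    intro x
    rcases eq_or_lt_of_le (hPn x) with h | h
    · rw [← h]; ring
    · have hA0 : A x.1 ≠ 0 := fun h0 => by linarith [(h0 ▸ hPA x : P x ≤ 0)]
      have hB0 : B x.2 ≠ 0 := fun h0 => by linarith [(h0 ▸ hPB x : P x ≤ 0)]
      rw [Real.log_mul hA0 hB0]; ring
  rw [Finset.sum_congr rfl fun x _ => hsplit x] at hG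
  have e1 : ∑ x : α × β, P x * Real.log (A x.1) = ∑ a, A a * Real.log (A a) := by
    rw [Fintype.sum_prod_type]
    refine Finset.sum_congr rfl fun a _ => ?_
    have : ∀ y : β, P (a, y) * Real.log (A (a, y).1) = P (a, y) * Real.log (A a) :=
      fun y => rfl
    rw [Finset.sum_congr rfl fun y _ => this y, ← Finset.sum_mul]
  have e2 : ∑ x : α × β, P x * Real.log (B x.2) = ∑ b, B b * Real.log (B b) := by
    rw [Fintype.sum_prod_type, Finset.sum_comm]
    refine Finset.sum_congr rfl fun b _ => ?_
    have : ∀ y : α, P (y, b) * Real.log (B (y, b).2) = P (y, b) * Real.log (B b) :=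
      fun y => rfl
    rw [Finset.sum_congr rfl fun y _ => this y, ← Finset.sum_mul]
  rw [Finset.sum_sub_distrib, Finset.sum_add_distrib, e1, e2] at hG
  rw [Hent_eq P, Hent_eq A, Hent_eq B]
  linarith

lemma sum3_abc (f : α × β × γ → ℝ) : ∑ x, f x = ∑ a, ∑ b, ∑ c, f (a, b, c) := by
  rw [Fintype.sum_prod_type]
  exact Finset.sum_congr rfl fun a _ => by rw [Fintype.sum_prod_type]

lemma sum3_acb (f : α × β × γ → ℝ) : ∑ x, f x = ∑ a, ∑ c, ∑ b, f (a, b, c) := by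
  rw [sum3_abc]
  exact Finset.sum_congr rfl fun a _ => Finset.sum_comm

lemma sum3_cab (f : α × β × γ → ℝ) : ∑ x, f x = ∑ c, ∑ a, ∑ b, f (a, b, c) := by
  rw [sum3_acb]
  exact Finset.sum_comm

lemma sum3_bca (f : α × β × γ → ℝ) : ∑ x, f x = ∑ b, ∑ c, ∑ a, f (a, b, c) := by
  rw [sum3_abc, Finset.sum_comm]
  exact Finset.sum_congr rfl fun b _ => Finset.sum_comm

/-- Submodularity of entropy: `H(A,B,C) + H(C) ≤ H(A,C) + H(B,C)`. -/
lemma submod_pmf (P : α × β × γ → ℝ) (hP : IsPMF P) :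
    Hent P + Hent (fun c => ∑ a, ∑ b, P (a, b, c))
      ≤ Hent (fun p : α × γ => ∑ b, P (p.1, b, p.2))
        + Hent (fun p : β × γ => ∑ a, P (a, p.1, p.2)) := by
  set A : α × γ → ℝ := fun p => ∑ b, P (p.1, b, p.2) with hA
  set B : β × γ → ℝ := fun p => ∑ a, P (a, p.1, p.2) with hB
  set C : γ → ℝ := fun c => ∑ a, ∑ b, P (a, b, c) with hC
  have hPn := hP.1
  have hAn : ∀ p, 0 ≤ A p := fun p => Finset.sum_nonneg fun b _ => hPn _
  have hBn : ∀ p, 0 ≤ B p := fun p => Finset.sum_nonneg fun a _ => hPn _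
  have hCn : ∀ c, 0 ≤ C c :=
    fun c => Finset.sum_nonneg fun a _ => Finset.sum_nonneg fun b _ => hPn _
  have hPA : ∀ x : α × β × γ, P x ≤ A (x.1, x.2.2) := fun x =>
    Finset.single_le_sum (fun b _ => hPn (x.1, b, x.2.2)) (Finset.mem_univ x.2.1)
  have hPB : ∀ x : α × β × γ, P x ≤ B (x.2.1, x.2.2) := fun x =>
    Finset.single_le_sum (fun a _ => hPn (a, x.2.1, x.2.2)) (Finset.mem_univ x.1)
  have hAC : ∀ (a : α) (c : γ), A (a, c) ≤ C c := fun a c =>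
    Finset.single_le_sum (fun a' _ => Finset.sum_nonneg fun b _ => hPn (a', b, c))
      (Finset.mem_univ a)
  have hPC : ∀ x : α × β × γ, P x ≤ C x.2.2 := fun x => le_trans (hPA x) (hAC x.1 x.2.2)
  have hCA : ∀ c, ∑ a, A (a, c) = C c := fun c => rfl
  have hCB : ∀ c, ∑ b, B (b, c) = C c := fun c => Finset.sum_comm
  have hCs : ∑ c, C c = 1 := by
    have := hP.2
    rw [sum3_cab] at this
    exact this
  -- the comparison pmf
  set q : α × β × γ → ℝ := fun x => A (x.1, x.2.2) * B (x.2.1, x.2.2) / C x.2.2 with hq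
  have hqn : ∀ x, 0 ≤ q x := fun x => div_nonneg (mul_nonneg (hAn _) (hBn _)) (hCn _)
  have habs : ∀ x, q x = 0 → P x = 0 := by
    intro x hx
    rw [hq, div_eq_zero_iff] at hx
    rcases hx with hx | hx
    · rcases mul_eq_zero.mp hx with h | h
      · linarith [hPn x, (h ▸ hPA x : P x ≤ 0)]
      · linarith [hPn x, (h ▸ hPB x : P x ≤ 0)]
    · linarith [hPn x, (hx ▸ hPC x : P x ≤ 0)]
  have hqs : ∑ x, q x ≤ 1 := by
    rw [sum3_cab]
    have key : ∀ c, (∑ a, ∑ b, q (a, b, c)) ≤ C c := by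
      intro c
      have step : (∑ a, ∑ b, q (a, b, c)) = C c * C c / C c := by
        have inner : ∀ a : α, (∑ b, q (a, b, c)) = A (a, c) * C c / C c := by
          intro a
          have : ∀ b : β, q (a, b, c) = A (a, c) * B (b, c) / C c := fun b => rfl
          rw [Finset.sum_congr rfl fun b _ => this b, ← Finset.sum_div, ← Finset.mul_sum,
            hCB c]
        rw [Finset.sum_congr rfl fun a _ => inner a, ← Finset.sum_div, ← Finset.sum_mul,
          hCA c]
      rcases eq_or_ne (C c) 0 with h | h
      · rw [step, h]; simp
      · rw [step, mul_div_assoc, div_self h, mul_one]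
    calc (∑ c, ∑ a, ∑ b, q (a, b, c)) ≤ ∑ c, C c := Finset.sum_le_sum fun c _ => key c
      _ = 1 := hCs
  have hG := gibbs P q hPn hqn habs hqs hP.2
  have hsplit : ∀ x, P x * (Real.log (q x) - Real.log (P x))
      = P x * Real.log (A (x.1, x.2.2)) + P x * Real.log (B (x.2.1, x.2.2))
        - P x * Real.log (C x.2.2) - P x * Real.log (P x) := by
    intro x
    rcases eq_or_lt_of_le (hPn x) with h | h
    · rw [← h]; ring
    · have hA0 : A (x.1, x.2.2) ≠ 0 := fun h0 => by linarith [(h0 ▸ hPA x : P x ≤ 0)]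
      have hB0 : B (x.2.1, x.2.2) ≠ 0 := fun h0 => by linarith [(h0 ▸ hPB x : P x ≤ 0)]
      have hC0 : C x.2.2 ≠ 0 := fun h0 => by linarith [(h0 ▸ hPC x : P x ≤ 0)]
      rw [hq]
      rw [Real.log_div (mul_ne_zero hA0 hB0) hC0, Real.log_mul hA0 hB0]
      ring
  rw [Finset.sum_congr rfl fun x _ => hsplit x] at hG
  rw [Finset.sum_sub_distrib, Finset.sum_sub_distrib, Finset.sum_add_distrib] at hG
  have eA : ∑ x : α × β × γ, P x * Real.log (A (x.1, x.2.2))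
      = ∑ p : α × γ, A p * Real.log (A p) := by
    rw [sum3_acb (fun x => P x * Real.log (A (x.1, x.2.2))), Fintype.sum_prod_type]
    refine Finset.sum_congr rfl fun a _ => Finset.sum_congr rfl fun c _ => ?_
    have : ∀ b : β, P (a, b, c) * Real.log (A ((a, b, c).1, (a, b, c).2.2))
        = P (a, b, c) * Real.log (A (a, c)) := fun b => rfl
    rw [Finset.sum_congr rfl fun b _ => this b, ← Finset.sum_mul]
  have eB : ∑ x : α × β × γ, P x * Real.log (B (x.2.1, x.2.2))
      = ∑ p : β × γ, B p * Real.log (B p) := by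
    rw [sum3_bca (fun x => P x * Real.log (B (x.2.1, x.2.2))), Fintype.sum_prod_type]
    refine Finset.sum_congr rfl fun b _ => Finset.sum_congr rfl fun c _ => ?_
    have : ∀ a : α, P (a, b, c) * Real.log (B ((a, b, c).2.1, (a, b, c).2.2))
        = P (a, b, c) * Real.log (B (b, c)) := fun a => rfl
    rw [Finset.sum_congr rfl fun a _ => this a, ← Finset.sum_mul]
  have eC : ∑ x : α × β × γ, P x * Real.log (C x.2.2) = ∑ c, C c * Real.log (C c) := by
    rw [sum3_cab (fun x => P x * Real.log (C x.2.2))]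
    refine Finset.sum_congr rfl fun c _ => ?_
    have : ∀ (a : α) (b : β), P (a, b, c) * Real.log (C (a, b, c).2.2)
        = P (a, b, c) * Real.log (C c) := fun a b => rfl
    calc (∑ a, ∑ b, P (a, b, c) * Real.log (C (a, b, c).2.2))
        = ∑ a, (∑ b, P (a, b, c)) * Real.log (C c) := by
          refine Finset.sum_congr rfl fun a _ => ?_
          rw [Finset.sum_congr rfl fun b _ => this a b, ← Finset.sum_mul]
      _ = C c * Real.log (C c) := by rw [← Finset.sum_mul]
  rw [eA, eB, eC] at hG
  rw [Hent_eq P, Hent_eq A, Hent_eq B, Hent_eq C]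
  rw [Fintype.sum_prod_type (f := fun p : α × γ => A p * Real.log (A p))] at *
  linarith

-- marginals of pushforwards
lemma marg_fst (P : Ω → ℝ) (f : Ω → α) (g : Ω → β) :
    (fun a => ∑ b, pushf P (fun ω => (f ω, g ω)) (a, b)) = pushf P f := by
  funext a
  unfold pushf
  rw [Finset.sum_comm]
  refine Finset.sum_congr rfl fun ω _ => ?_
  simp only [Prod.mk.injEq]
  by_cases h : f ω = a <;> simp [h]

lemma marg_snd (P : Ω → ℝ) (f : Ω → α) (g : Ω → β) :
    (fun b => ∑ a, pushf P (fun ω => (f ω, g ω)) (a, b)) = pushf P g := by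
  funext b
  unfold pushf
  rw [Finset.sum_comm]
  refine Finset.sum_congr rfl fun ω _ => ?_
  simp only [Prod.mk.injEq]
  by_cases h : g ω = b <;> simp [h]

lemma marg13 (P : Ω → ℝ) (f : Ω → α) (g : Ω → β) (k : Ω → γ) :
    (fun p : α × γ => ∑ b, pushf P (fun ω => (f ω, g ω, k ω)) (p.1, b, p.2))
      = pushf P (fun ω => (f ω, k ω)) := by
  funext p
  unfold pushf
  rw [Finset.sum_comm]
  refine Finset.sum_congr rfl fun ω _ => ?_
  simp only [Prod.mk.injEq]
  by_cases h1 : f ω = p.1 <;> by_cases h2 : k ω = p.2 <;> simp [Prod.ext_iff, h1, h2]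

lemma marg23 (P : Ω → ℝ) (f : Ω → α) (g : Ω → β) (k : Ω → γ) :
    (fun p : β × γ => ∑ a, pushf P (fun ω => (f ω, g ω, k ω)) (a, p.1, p.2))
      = pushf P (fun ω => (g ω, k ω)) := by
  funext p
  unfold pushf
  rw [Finset.sum_comm]
  refine Finset.sum_congr rfl fun ω _ => ?_
  simp only [Prod.mk.injEq]
  by_cases h1 : g ω = p.1 <;> by_cases h2 : k ω = p.2 <;> simp [Prod.ext_iff, h1, h2]

lemma marg3 (P : Ω → ℝ) (f : Ω → α) (g : Ω → β) (k : Ω → γ) :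
    (fun c : γ => ∑ a, ∑ b, pushf P (fun ω => (f ω, g ω, k ω)) (a, b, c))
      = pushf P k := by
  funext c
  have this1 : ∀ a : α, (∑ b, pushf P (fun ω => (f ω, g ω, k ω)) (a, b, c))
      = ∑ ω, if f ω = a ∧ k ω = c then P ω else 0 := by
    intro a
    unfold pushf
    rw [Finset.sum_comm]
    refine Finset.sum_congr rfl fun ω _ => ?_
    by_cases h1 : f ω = a <;> by_cases h2 : k ω = c <;> simp [Prod.ext_iff, h1, h2]
  refine Eq.trans (Finset.sum_congr rfl fun a _ => this1 a) ?_
  rw [Finset.sum_comm]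
  unfold pushf
  refine Finset.sum_congr rfl fun ω _ => ?_
  by_cases h2 : k ω = c <;> simp [h2]

lemma h_subadd (P : Ω → ℝ) (hP : IsPMF P) (f : Ω → α) (g : Ω → β) :
    Hent (pushf P (fun ω => (f ω, g ω))) ≤ Hent (pushf P f) + Hent (pushf P g) := by
  have h := subadd_pmf (pushf P (fun ω => (f ω, g ω))) (hP.pushf _)
  rwa [marg_fst, marg_snd] at h

lemma h_submod (P : Ω → ℝ) (hP : IsPMF P) (f : Ω → α) (g : Ω → β) (k : Ω → γ) :
    Hent (pushf P (fun ω => (f ω, g ω, k ω))) + Hent (pushf P k)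
      ≤ Hent (pushf P (fun ω => (f ω, k ω))) + Hent (pushf P (fun ω => (g ω, k ω))) := by
  have h := submod_pmf (pushf P (fun ω => (f ω, g ω, k ω))) (hP.pushf _)
  rwa [marg13, marg23, marg3] at h

section prod
variable {Ω₁ Ω₂ : Type*} [Fintype Ω₁] [Fintype Ω₂]

lemma pushf_prod (P₁ : Ω₁ → ℝ) (P₂ : Ω₂ → ℝ) (f₁ : Ω₁ → α) (f₂ : Ω₂ → β) :
    pushf (fun ω : Ω₁ × Ω₂ => P₁ ω.1 * P₂ ω.2) (fun ω => (f₁ ω.1, f₂ ω.2))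
      = fun p => pushf P₁ f₁ p.1 * pushf P₂ f₂ p.2 := by
  funext p
  unfold pushf
  rw [Fintype.sum_prod_type]
  refine Eq.trans (Finset.sum_congr rfl fun ω₁ _ => Finset.sum_congr rfl fun ω₂ _ => ?_)
    (Finset.sum_mul_sum _ _ _ _).symm
  by_cases h1 : f₁ ω₁ = p.1 <;> by_cases h2 : f₂ ω₂ = p.2 <;> simp [Prod.ext_iff, h1, h2]

lemma pushf_block_fst (P₁ : Ω₁ → ℝ) (P₂ : Ω₂ → ℝ) (h₂ : ∑ ω, P₂ ω = 1) (f₁ : Ω₁ → α) :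
    pushf (fun ω : Ω₁ × Ω₂ => P₁ ω.1 * P₂ ω.2) (fun ω => f₁ ω.1) = pushf P₁ f₁ := by
  funext a
  unfold pushf
  rw [Fintype.sum_prod_type]
  beta_reduce
  refine Finset.sum_congr rfl fun ω₁ _ => ?_
  by_cases h : f₁ ω₁ = a
  · simp only [h, if_true, ← Finset.mul_sum, h₂, mul_one]
  · simp [h]

lemma pushf_block_snd (P₁ : Ω₁ → ℝ) (P₂ : Ω₂ → ℝ) (h₁ : ∑ ω, P₁ ω = 1) (f₂ : Ω₂ → β) :
    pushf (fun ω : Ω₁ × Ω₂ => P₁ ω.1 * P₂ ω.2) (fun ω => f₂ ω.2) = pushf P₂ f₂ := by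
  funext b
  unfold pushf
  rw [Fintype.sum_prod_type, Finset.sum_comm]
  beta_reduce
  refine Finset.sum_congr rfl fun ω₂ _ => ?_
  by_cases h : f₂ ω₂ = b
  · simp only [h, if_true]
    rw [← Finset.sum_mul, h₁, one_mul]
  · simp [h]

lemma Hent_prod (P₁ : α → ℝ) (P₂ : β → ℝ) (h₁ : ∑ a, P₁ a = 1) (h₂ : ∑ b, P₂ b = 1) :
    Hent (fun p : α × β => P₁ p.1 * P₂ p.2) = Hent P₁ + Hent P₂ := by
  unfold Hent
  rw [Fintype.sum_prod_type]
  beta_reduce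
  have : ∀ (a : α) (b : β), Real.negMulLog (P₁ a * P₂ b)
      = P₂ b * Real.negMulLog (P₁ a) + P₁ a * Real.negMulLog (P₂ b) := by
    intro a b; rw [Real.negMulLog_mul]
  calc (∑ a, ∑ b, Real.negMulLog (P₁ a * P₂ b))
      = ∑ a, ∑ b, (P₂ b * Real.negMulLog (P₁ a) + P₁ a * Real.negMulLog (P₂ b)) :=
        Finset.sum_congr rfl fun a _ => Finset.sum_congr rfl fun b _ => this a b
    _ = ∑ a, (Real.negMulLog (P₁ a) + P₁ a * ∑ b, Real.negMulLog (P₂ b)) := by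
        refine Finset.sum_congr rfl fun a _ => ?_
        rw [Finset.sum_add_distrib, ← Finset.sum_mul, ← Finset.mul_sum, h₂, one_mul]
    _ = (∑ a, Real.negMulLog (P₁ a)) + ∑ b, Real.negMulLog (P₂ b) := by
        rw [Finset.sum_add_distrib, ← Finset.sum_mul, h₁, one_mul]

/-- Master independence lemma: if under the identification `e`, `P` is a product `P₁ ⊗ P₂` and
`Fn = (f₁, f₂)` splits across the two blocks, then `H(Fn) = H(G) + H(H)`. -/
lemma h_indep (P : Ω → ℝ) (e : Ω₁ × Ω₂ ≃ Ω)
    (P₁ : Ω₁ → ℝ) (P₂ : Ω₂ → ℝ) (hP1 : ∑ ω, P₁ ω = 1) (hP2 : ∑ ω, P₂ ω = 1)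
    (hPe : ∀ ω : Ω₁ × Ω₂, P (e ω) = P₁ ω.1 * P₂ ω.2)
    (f₁ : Ω₁ → α) (f₂ : Ω₂ → β)
    (Fn : Ω → α × β) (hF : ∀ ω : Ω₁ × Ω₂, Fn (e ω) = (f₁ ω.1, f₂ ω.2))
    (G : Ω → α) (hG : ∀ ω : Ω₁ × Ω₂, G (e ω) = f₁ ω.1)
    (H : Ω → β) (hH : ∀ ω : Ω₁ × Ω₂, H (e ω) = f₂ ω.2) :
    Hent (pushf P Fn) = Hent (pushf P G) + Hent (pushf P H) := by
  rw [pushf_equiv P Fn e, pushf_equiv P G e, pushf_equiv P H e]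
  have hPP : (fun ω' : Ω₁ × Ω₂ => P (e ω')) = fun ω' => P₁ ω'.1 * P₂ ω'.2 := funext hPe
  rw [hPP, funext hF, funext hG, funext hH, pushf_prod,
    pushf_block_fst P₁ P₂ hP2 f₁, pushf_block_snd P₁ P₂ hP1 f₂]
  exact Hent_prod _ _ (by rw [sum_pushf]; exact hP1) (by rw [sum_pushf]; exact hP2)

end prod

lemma cmi_pushf (P : Ω → ℝ) (f : Ω → α) (g : Ω → β) (k : Ω → γ) :
    cmiInfo (pushf P (fun ω => (f ω, g ω, k ω)))
      = Hent (pushf P (fun ω => (f ω, k ω))) + Hent (pushf P (fun ω => (g ω, k ω)))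
        - Hent (pushf P k) - Hent (pushf P (fun ω => (f ω, g ω, k ω))) := by
  unfold cmiInfo
  rw [marg13, marg23, marg3]

lemma mi_pushf (P : Ω → ℝ) (f : Ω → α) (g : Ω → β) :
    miInfo (pushf P (fun ω => (f ω, g ω)))
      = Hent (pushf P f) + Hent (pushf P g) - Hent (pushf P (fun ω => (f ω, g ω))) := by
  unfold miInfo
  rw [marg_fst, marg_snd]

lemma sum_mul_one (P₁ : α → ℝ) (P₂ : β → ℝ) (h₁ : ∑ a, P₁ a = 1) (h₂ : ∑ b, P₂ b = 1) :
    ∑ x : α × β, P₁ x.1 * P₂ x.2 = 1 :=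
  (Fintype.sum_prod_type _).trans
    (((Finset.sum_mul_sum Finset.univ Finset.univ P₁ P₂).symm).trans (by rw [h₁, h₂, one_mul]))

section equivs
variable (S1 S2 F : Type*)

/-- split off the `n₂` coordinate. -/
def eSplit1 : F × ((S1 × F) × ((S2 × F) × (F × F))) ≃ (S1 × F) × (S2 × F) × F × F × F where
  toFun x := (x.2.1, x.2.2.1, x.2.2.2.1, x.1, x.2.2.2.2)
  invFun ω := (ω.2.2.2.1, ω.1, ω.2.1, ω.2.2.1, ω.2.2.2.2)
  left_inv x := rfl
  right_inv ω := rfl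

/-- split off the `n₁'` coordinate. -/
def eSplit4 : F × ((S1 × F) × ((S2 × F) × (F × F))) ≃ (S1 × F) × (S2 × F) × F × F × F where
  toFun x := (x.2.1, x.2.2.1, x.2.2.2.1, x.2.2.2.2, x.1)
  invFun ω := (ω.2.2.2.2, ω.1, ω.2.1, ω.2.2.1, ω.2.2.2.1)
  left_inv x := rfl
  right_inv ω := rfl

/-- split off the `(n₁, n₁')` pair. -/
def eSplit5 : (F × F) × ((S1 × F) × ((S2 × F) × F)) ≃ (S1 × F) × (S2 × F) × F × F × F where
  toFun x := (x.2.1, x.2.2.1, x.1.1, x.2.2.2, x.1.2)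
  invFun ω := ((ω.2.2.1, ω.2.2.2.2), ω.1, ω.2.1, ω.2.2.2.1)
  left_inv x := rfl
  right_inv ω := rfl

/-- split off `n₁`, then `n₁'`. -/
def eSplit2 : F × (F × ((S1 × F) × ((S2 × F) × F))) ≃ (S1 × F) × (S2 × F) × F × F × F where
  toFun x := (x.2.2.1, x.2.2.2.1, x.1, x.2.2.2.2, x.2.1)
  invFun ω := (ω.2.2.1, ω.2.2.2.2, ω.1, ω.2.1, ω.2.2.2.1)
  left_inv x := rfl
  right_inv ω := rfl

end equivs


end InfoTheoryAux

/-- the key single-letter sum-rate inequality for the additive two-way wiretap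
channel over a finite field `F` (`q = |F|`) when the eavesdropper's observation is a degraded
version of user 1's output: with `b₃ := a₃a₁⁻¹b₁`, `N₃ := a₃a₁⁻¹N₁ + N₁'`,
`Y₁ = a₁X₁+b₁X₂+N₁`, `Y₂ = a₂X₁+b₂X₂+N₂`, `Z = a₃X₁+b₃X₂+N₃`,
`I(Y₂;V₁|V₂) + I(Y₁;V₂|V₁) − I(V₁,V₂;Z) ≤ log q + H(N₃) − H(N₁) − H(N₂)`. -/
theorem degraded_sum_rate_bound {F : Type*} [Field F] [Fintype F]
    {S1 S2 : Type*} [Fintype S1] [Fintype S2]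
    (a1 b1 a2 b2 a3 : F)
    (ha1 : a1 ≠ 0) (hb1 : b1 ≠ 0) (ha2 : a2 ≠ 0) (hb2 : b2 ≠ 0) (ha3 : a3 ≠ 0)
    (p12 : S1 × F → ℝ) (p34 : S2 × F → ℝ) (q1 q2 q1' : F → ℝ)
    (hp12 : IsPMF p12) (hp34 : IsPMF p34) (hq1 : IsPMF q1) (hq2 : IsPMF q2)
    (hq1' : IsPMF q1') :
    -- ω = ((v₁,x₁),(v₂,x₂),n₁,n₂,n₁');  b₃ = a₃a₁⁻¹b₁, N₃ = a₃a₁⁻¹N₁+N₁'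
    cmiInfo (pushf (blockPMF p12 p34 q1 q2 q1')
        (fun ω => (a2 * ω.1.2 + b2 * ω.2.1.2 + ω.2.2.2.1, ω.1.1, ω.2.1.1)))
      + cmiInfo (pushf (blockPMF p12 p34 q1 q2 q1')
        (fun ω => (a1 * ω.1.2 + b1 * ω.2.1.2 + ω.2.2.1, ω.2.1.1, ω.1.1)))
      - miInfo (pushf (blockPMF p12 p34 q1 q2 q1')
        (fun ω => ((ω.1.1, ω.2.1.1),
          a3 * ω.1.2 + (a3 * a1⁻¹ * b1) * ω.2.1.2 + (a3 * a1⁻¹ * ω.2.2.1 + ω.2.2.2.2))))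
      ≤ Real.log (Fintype.card F)
        + Hent (pushf (blockPMF p12 p34 q1 q2 q1')
            (fun ω => a3 * a1⁻¹ * ω.2.2.1 + ω.2.2.2.2))
        - Hent (pushf (blockPMF p12 p34 q1 q2 q1') (fun ω => ω.2.2.1))
        - Hent (pushf (blockPMF p12 p34 q1 q2 q1') (fun ω => ω.2.2.2.1)) := by
  -- the joint pmf
  have hPmf : IsPMF (blockPMF p12 p34 q1 q2 q1') := by
    constructor
    · intro ω
      exact mul_nonneg (mul_nonneg (mul_nonneg (mul_nonneg (hp12.1 _) (hp34.1 _))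
        (hq1.1 _)) (hq2.1 _)) (hq1'.1 _)
    · have e : blockPMF p12 p34 q1 q2 q1' = fun ω : (S1 × F) × (S2 × F) × F × F × F =>
          p12 ω.1 * (p34 ω.2.1 * (q1 ω.2.2.1 * (q2 ω.2.2.2.1 * q1' ω.2.2.2.2))) := by
        funext ω; simp only [blockPMF]; ring
      rw [e]
      exact sum_mul_one _ _ hp12.2 (sum_mul_one _ _ hp34.2 (sum_mul_one _ _ hq1.2
        (sum_mul_one _ _ hq2.2 hq1'.2)))
  -- pmf sums for the regrouped blocks
  have hR1 : ∑ y : (S1 × F) × (S2 × F) × F × F,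
      p12 y.1 * (p34 y.2.1 * (q1 y.2.2.1 * q1' y.2.2.2)) = 1 :=
    sum_mul_one _ _ hp12.2 (sum_mul_one _ _ hp34.2 (sum_mul_one _ _ hq1.2 hq1'.2))
  have hR4 : ∑ y : (S1 × F) × (S2 × F) × F × F,
      p12 y.1 * (p34 y.2.1 * (q1 y.2.2.1 * q2 y.2.2.2)) = 1 :=
    sum_mul_one _ _ hp12.2 (sum_mul_one _ _ hp34.2 (sum_mul_one _ _ hq1.2 hq2.2))
  have hR5 : ∑ y : (S1 × F) × (S2 × F) × F,
      p12 y.1 * (p34 y.2.1 * q2 y.2.2) = 1 :=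
    sum_mul_one _ _ hp12.2 (sum_mul_one _ _ hp34.2 hq2.2)
  have hPN : ∑ nn : F × F, q1 nn.1 * q1' nn.2 = 1 := sum_mul_one _ _ hq1.2 hq1'.2
  have hR2 : ∑ y : F × ((S1 × F) × (S2 × F) × F),
      q1' y.1 * (p12 y.2.1 * (p34 y.2.2.1 * q2 y.2.2.2)) = 1 :=
    sum_mul_one _ _ hq1'.2 hR5
  -- unfolding the information quantities
  have ecmi2 : cmiInfo (pushf (blockPMF p12 p34 q1 q2 q1') (fun ω => (a2 * ω.1.2 + b2 * ω.2.1.2 + ω.2.2.2.1, ω.1.1, ω.2.1.1)))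
      = Hent (pushf (blockPMF p12 p34 q1 q2 q1') (fun ω => (a2 * ω.1.2 + b2 * ω.2.1.2 + ω.2.2.2.1, ω.2.1.1))) + Hent (pushf (blockPMF p12 p34 q1 q2 q1') (fun ω => (ω.1.1, ω.2.1.1)))
        - Hent (pushf (blockPMF p12 p34 q1 q2 q1') (fun ω => ω.2.1.1)) - Hent (pushf (blockPMF p12 p34 q1 q2 q1') (fun ω => (a2 * ω.1.2 + b2 * ω.2.1.2 + ω.2.2.2.1, ω.1.1, ω.2.1.1))) := cmi_pushf _ _ _ _
  have ecmi1 : cmiInfo (pushf (blockPMF p12 p34 q1 q2 q1') (fun ω => (a1 * ω.1.2 + b1 * ω.2.1.2 + ω.2.2.1, ω.2.1.1, ω.1.1)))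
      = Hent (pushf (blockPMF p12 p34 q1 q2 q1') (fun ω => (a1 * ω.1.2 + b1 * ω.2.1.2 + ω.2.2.1, ω.1.1))) + Hent (pushf (blockPMF p12 p34 q1 q2 q1') (fun ω => (ω.2.1.1, ω.1.1)))
        - Hent (pushf (blockPMF p12 p34 q1 q2 q1') (fun ω => ω.1.1)) - Hent (pushf (blockPMF p12 p34 q1 q2 q1') (fun ω => (a1 * ω.1.2 + b1 * ω.2.1.2 + ω.2.2.1, ω.2.1.1, ω.1.1))) := cmi_pushf _ _ _ _
  have emi : miInfo (pushf (blockPMF p12 p34 q1 q2 q1') (fun ω => ((ω.1.1, ω.2.1.1), a3 * ω.1.2 + (a3 * a1⁻¹ * b1) * ω.2.1.2 + (a3 * a1⁻¹ * ω.2.2.1 + ω.2.2.2.2))))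
      = Hent (pushf (blockPMF p12 p34 q1 q2 q1') (fun ω => (ω.1.1, ω.2.1.1))) + Hent (pushf (blockPMF p12 p34 q1 q2 q1') (fun ω => a3 * ω.1.2 + (a3 * a1⁻¹ * b1) * ω.2.1.2 + (a3 * a1⁻¹ * ω.2.2.1 + ω.2.2.2.2)))
        - Hent (pushf (blockPMF p12 p34 q1 q2 q1') (fun ω => ((ω.1.1, ω.2.1.1), a3 * ω.1.2 + (a3 * a1⁻¹ * b1) * ω.2.1.2 + (a3 * a1⁻¹ * ω.2.2.1 + ω.2.2.2.2)))) := mi_pushf _ _ _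
  -- Piece A : I(Y₂;V₁|V₂) ≤ log q − H(N₂)
  have a1f : Hent (pushf (blockPMF p12 p34 q1 q2 q1') (fun ω => (a2 * ω.1.2 + b2 * ω.2.1.2 + ω.2.2.2.1, ω.2.1.1))) ≤ Hent (pushf (blockPMF p12 p34 q1 q2 q1') (fun ω => a2 * ω.1.2 + b2 * ω.2.1.2 + ω.2.2.2.1)) + Hent (pushf (blockPMF p12 p34 q1 q2 q1') (fun ω => ω.2.1.1)) :=
    h_subadd _ hPmf _ _
  have a2f : Hent (pushf (blockPMF p12 p34 q1 q2 q1') (fun ω => a2 * ω.1.2 + b2 * ω.2.1.2 + ω.2.2.2.1)) ≤ Real.log (Fintype.card F) :=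
    Hent_le_log _ (hPmf.pushf _)
  have a3f : Hent (pushf (blockPMF p12 p34 q1 q2 q1') (fun ω => (a2 * ω.1.2 + b2 * ω.2.1.2 + ω.2.2.2.1, (ω.1.2, ω.2.1.2), ω.1.1, ω.2.1.1))) + Hent (pushf (blockPMF p12 p34 q1 q2 q1') (fun ω => (ω.1.1, ω.2.1.1)))
      ≤ Hent (pushf (blockPMF p12 p34 q1 q2 q1') (fun ω => (a2 * ω.1.2 + b2 * ω.2.1.2 + ω.2.2.2.1, ω.1.1, ω.2.1.1))) + Hent (pushf (blockPMF p12 p34 q1 q2 q1') (fun ω => ((ω.1.2, ω.2.1.2), ω.1.1, ω.2.1.1))) :=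
    h_submod _ hPmf _ _ _
  have hinjA4 : Function.Injective (fun x : F × (F × F) × S1 × S2 =>
      ((x.1 - a2 * x.2.1.1 - b2 * x.2.1.2, x.2) : F × (F × F) × S1 × S2)) := by
    intro x y h
    simp only [Prod.mk.injEq] at h
    obtain ⟨h1, h2⟩ := h
    rw [h2] at h1
    exact Prod.ext_iff.mpr ⟨by linear_combination h1, h2⟩
  have a4f : Hent (pushf (blockPMF p12 p34 q1 q2 q1') (fun ω => (ω.2.2.2.1, (ω.1.2, ω.2.1.2), ω.1.1, ω.2.1.1))) = Hent (pushf (blockPMF p12 p34 q1 q2 q1') (fun ω => (a2 * ω.1.2 + b2 * ω.2.1.2 + ω.2.2.2.1, (ω.1.2, ω.2.1.2), ω.1.1, ω.2.1.1))) :=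
    h_inj _ _ hinjA4 _ (fun ω => Prod.ext_iff.mpr ⟨by ring, rfl⟩)
  have a5f : Hent (pushf (blockPMF p12 p34 q1 q2 q1') (fun ω => (ω.2.2.2.1, (ω.1.2, ω.2.1.2), ω.1.1, ω.2.1.1))) = Hent (pushf (blockPMF p12 p34 q1 q2 q1') (fun ω => ω.2.2.2.1)) + Hent (pushf (blockPMF p12 p34 q1 q2 q1') (fun ω => ((ω.1.2, ω.2.1.2), ω.1.1, ω.2.1.1))) :=
    h_indep _ (eSplit1 S1 S2 F) q2
      (fun y => p12 y.1 * (p34 y.2.1 * (q1 y.2.2.1 * q1' y.2.2.2))) hq2.2 hR1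
      (fun x => by simp only [blockPMF, eSplit1, Equiv.coe_fn_mk]; ring)
      (fun n => n) (fun y => ((y.1.2, y.2.1.2), y.1.1, y.2.1.1))
      _ (fun x => rfl) _ (fun x => rfl) _ (fun x => rfl)
  -- Piece B preliminaries
  have b1f : Hent (pushf (blockPMF p12 p34 q1 q2 q1') (fun ω => (a1 * ω.1.2 + b1 * ω.2.1.2 + ω.2.2.1, ω.1.1))) ≤ Hent (pushf (blockPMF p12 p34 q1 q2 q1') (fun ω => a1 * ω.1.2 + b1 * ω.2.1.2 + ω.2.2.1)) + Hent (pushf (blockPMF p12 p34 q1 q2 q1') (fun ω => ω.1.1)) :=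
    h_subadd _ hPmf _ _
  have b2af : Hent (pushf (blockPMF p12 p34 q1 q2 q1') (fun ω => (a3 * ω.1.2 + (a3 * a1⁻¹ * b1) * ω.2.1.2 + (a3 * a1⁻¹ * ω.2.2.1 + ω.2.2.2.2), ω.2.2.2.2))) ≤ Hent (pushf (blockPMF p12 p34 q1 q2 q1') (fun ω => a3 * ω.1.2 + (a3 * a1⁻¹ * b1) * ω.2.1.2 + (a3 * a1⁻¹ * ω.2.2.1 + ω.2.2.2.2))) + Hent (pushf (blockPMF p12 p34 q1 q2 q1') (fun ω => ω.2.2.2.2)) :=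
    h_subadd _ hPmf _ _
  have hinjB2 : Function.Injective (fun x : F × F =>
      ((a3 * a1⁻¹ * x.2 + x.1, x.1) : F × F)) := by
    intro x y h
    simp only [Prod.mk.injEq] at h
    obtain ⟨h1, h2⟩ := h
    rw [h2] at h1
    have h3 : a3 * a1⁻¹ * x.2 = a3 * a1⁻¹ * y.2 := by linear_combination h1
    exact Prod.ext_iff.mpr ⟨h2, mul_left_cancel₀ (mul_ne_zero ha3 (inv_ne_zero ha1)) h3⟩
  have b2bf : Hent (pushf (blockPMF p12 p34 q1 q2 q1') (fun ω => (a3 * ω.1.2 + (a3 * a1⁻¹ * b1) * ω.2.1.2 + (a3 * a1⁻¹ * ω.2.2.1 + ω.2.2.2.2), ω.2.2.2.2))) = Hent (pushf (blockPMF p12 p34 q1 q2 q1') (fun ω => (ω.2.2.2.2, a1 * ω.1.2 + b1 * ω.2.1.2 + ω.2.2.1))) :=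
    h_inj _ _ hinjB2 _
      (fun ω => Prod.ext_iff.mpr ⟨by linear_combination (-(a3 * ω.1.2)) * inv_mul_cancel₀ ha1, rfl⟩)
  have b2cf : Hent (pushf (blockPMF p12 p34 q1 q2 q1') (fun ω => (ω.2.2.2.2, a1 * ω.1.2 + b1 * ω.2.1.2 + ω.2.2.1))) = Hent (pushf (blockPMF p12 p34 q1 q2 q1') (fun ω => ω.2.2.2.2)) + Hent (pushf (blockPMF p12 p34 q1 q2 q1') (fun ω => a1 * ω.1.2 + b1 * ω.2.1.2 + ω.2.2.1)) :=
    h_indep _ (eSplit4 S1 S2 F) q1'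
      (fun y => p12 y.1 * (p34 y.2.1 * (q1 y.2.2.1 * q2 y.2.2.2))) hq1'.2 hR4
      (fun x => by simp only [blockPMF, eSplit4, Equiv.coe_fn_mk]; ring)
      (fun n => n) (fun y => a1 * y.1.2 + b1 * y.2.1.2 + y.2.2.1)
      _ (fun x => rfl) _ (fun x => rfl) _ (fun x => rfl)
  have hinjB5 : Function.Injective (fun x : S2 × S1 => ((x.2, x.1) : S1 × S2)) := by
    intro x y h
    simp only [Prod.mk.injEq] at h
    exact Prod.ext_iff.mpr ⟨h.2, h.1⟩
  have b5f : Hent (pushf (blockPMF p12 p34 q1 q2 q1') (fun ω => (ω.2.1.1, ω.1.1))) = Hent (pushf (blockPMF p12 p34 q1 q2 q1') (fun ω => (ω.1.1, ω.2.1.1))) := by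
    refine Eq.symm (h_inj _ _ hinjB5 _ (fun ω => rfl))
  have hinjB6 : Function.Injective (fun x : F × S2 × S1 =>
      ((x.1, x.2.2, x.2.1) : F × S1 × S2)) := by
    intro x y h
    simp only [Prod.mk.injEq] at h
    exact Prod.ext_iff.mpr ⟨h.1, Prod.ext_iff.mpr ⟨h.2.2, h.2.1⟩⟩
  have b6f : Hent (pushf (blockPMF p12 p34 q1 q2 q1') (fun ω => (a1 * ω.1.2 + b1 * ω.2.1.2 + ω.2.2.1, ω.1.1, ω.2.1.1))) = Hent (pushf (blockPMF p12 p34 q1 q2 q1') (fun ω => (a1 * ω.1.2 + b1 * ω.2.1.2 + ω.2.2.1, ω.2.1.1, ω.1.1))) :=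
    h_inj _ _ hinjB6 _ (fun ω => rfl)
  have hinjB7 : Function.Injective (fun x : (S1 × S2) × F => ((x.2, x.1) : F × (S1 × S2))) := by
    intro x y h
    simp only [Prod.mk.injEq] at h
    exact Prod.ext_iff.mpr ⟨h.2, h.1⟩
  have b7f : Hent (pushf (blockPMF p12 p34 q1 q2 q1') (fun ω => (a3 * ω.1.2 + (a3 * a1⁻¹ * b1) * ω.2.1.2 + (a3 * a1⁻¹ * ω.2.2.1 + ω.2.2.2.2), ω.1.1, ω.2.1.1))) = Hent (pushf (blockPMF p12 p34 q1 q2 q1') (fun ω => ((ω.1.1, ω.2.1.1), a3 * ω.1.2 + (a3 * a1⁻¹ * b1) * ω.2.1.2 + (a3 * a1⁻¹ * ω.2.2.1 + ω.2.2.2.2)))) :=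
    h_inj _ _ hinjB7 _ (fun ω => rfl)
  -- the key submodularity step for piece B
  have b13f : Hent (pushf (blockPMF p12 p34 q1 q2 q1') (fun ω => (a1 * ω.1.2 + b1 * ω.2.1.2 + ω.2.2.1, (ω.1.2, ω.2.1.2), a3 * ω.1.2 + (a3 * a1⁻¹ * b1) * ω.2.1.2 + (a3 * a1⁻¹ * ω.2.2.1 + ω.2.2.2.2), ω.1.1, ω.2.1.1))) + Hent (pushf (blockPMF p12 p34 q1 q2 q1') (fun ω => (a3 * ω.1.2 + (a3 * a1⁻¹ * b1) * ω.2.1.2 + (a3 * a1⁻¹ * ω.2.2.1 + ω.2.2.2.2), ω.1.1, ω.2.1.1)))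
      ≤ Hent (pushf (blockPMF p12 p34 q1 q2 q1') (fun ω => (a1 * ω.1.2 + b1 * ω.2.1.2 + ω.2.2.1, a3 * ω.1.2 + (a3 * a1⁻¹ * b1) * ω.2.1.2 + (a3 * a1⁻¹ * ω.2.2.1 + ω.2.2.2.2), ω.1.1, ω.2.1.1))) + Hent (pushf (blockPMF p12 p34 q1 q2 q1') (fun ω => ((ω.1.2, ω.2.1.2), a3 * ω.1.2 + (a3 * a1⁻¹ * b1) * ω.2.1.2 + (a3 * a1⁻¹ * ω.2.2.1 + ω.2.2.2.2), ω.1.1, ω.2.1.1))) :=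
    h_submod _ hPmf _ _ _
  have hinjB14 : Function.Injective (fun x : F × (F × F) × F × S1 × S2 =>
      (((x.1 - a1 * x.2.1.1 - b1 * x.2.1.2,
         x.2.2.1 - a3 * x.2.1.1 - a3 * a1⁻¹ * b1 * x.2.1.2), x.2.1, x.2.2.2)
        : (F × F) × (F × F) × S1 × S2)) := by
    intro x y h
    simp only [Prod.mk.injEq] at h
    obtain ⟨⟨h1, h3⟩, hX, hW⟩ := h
    rw [hX] at h1 h3
    exact Prod.ext_iff.mpr ⟨by linear_combination h1,
      Prod.ext_iff.mpr ⟨hX, Prod.ext_iff.mpr ⟨by linear_combination h3, hW⟩⟩⟩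
  have b14f : Hent (pushf (blockPMF p12 p34 q1 q2 q1') (fun ω => ((ω.2.2.1, a3 * a1⁻¹ * ω.2.2.1 + ω.2.2.2.2), (ω.1.2, ω.2.1.2), ω.1.1, ω.2.1.1))) = Hent (pushf (blockPMF p12 p34 q1 q2 q1') (fun ω => (a1 * ω.1.2 + b1 * ω.2.1.2 + ω.2.2.1, (ω.1.2, ω.2.1.2), a3 * ω.1.2 + (a3 * a1⁻¹ * b1) * ω.2.1.2 + (a3 * a1⁻¹ * ω.2.2.1 + ω.2.2.2.2), ω.1.1, ω.2.1.1))) :=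
    h_inj _ _ hinjB14 _
      (fun ω => Prod.ext_iff.mpr ⟨Prod.ext_iff.mpr ⟨by ring, by ring⟩, rfl⟩)
  have b15f : Hent (pushf (blockPMF p12 p34 q1 q2 q1') (fun ω => ((ω.2.2.1, a3 * a1⁻¹ * ω.2.2.1 + ω.2.2.2.2), (ω.1.2, ω.2.1.2), ω.1.1, ω.2.1.1)))
      = Hent (pushf (blockPMF p12 p34 q1 q2 q1') (fun ω => (ω.2.2.1, a3 * a1⁻¹ * ω.2.2.1 + ω.2.2.2.2))) + Hent (pushf (blockPMF p12 p34 q1 q2 q1') (fun ω => ((ω.1.2, ω.2.1.2), ω.1.1, ω.2.1.1))) :=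
    h_indep _ (eSplit5 S1 S2 F) (fun nn : F × F => q1 nn.1 * q1' nn.2)
      (fun y => p12 y.1 * (p34 y.2.1 * q2 y.2.2)) hPN hR5
      (fun x => by simp only [blockPMF, eSplit5, Equiv.coe_fn_mk]; ring)
      (fun nn => (nn.1, a3 * a1⁻¹ * nn.1 + nn.2)) (fun y => ((y.1.2, y.2.1.2), y.1.1, y.2.1.1))
      _ (fun x => rfl) _ (fun x => rfl) _ (fun x => rfl)
  have hinjB16 : Function.Injective (fun x : (F × F) × F × S1 × S2 =>
      ((x.2.1 - a3 * x.1.1 - a3 * a1⁻¹ * b1 * x.1.2, x.1, x.2.2) : F × (F × F) × S1 × S2)) := by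
    intro x y h
    simp only [Prod.mk.injEq] at h
    obtain ⟨h1, hX, hW⟩ := h
    rw [hX] at h1
    exact Prod.ext_iff.mpr ⟨hX, Prod.ext_iff.mpr ⟨by linear_combination h1, hW⟩⟩
  have b16f : Hent (pushf (blockPMF p12 p34 q1 q2 q1') (fun ω => (a3 * a1⁻¹ * ω.2.2.1 + ω.2.2.2.2, (ω.1.2, ω.2.1.2), ω.1.1, ω.2.1.1))) = Hent (pushf (blockPMF p12 p34 q1 q2 q1') (fun ω => ((ω.1.2, ω.2.1.2), a3 * ω.1.2 + (a3 * a1⁻¹ * b1) * ω.2.1.2 + (a3 * a1⁻¹ * ω.2.2.1 + ω.2.2.2.2), ω.1.1, ω.2.1.1))) :=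
    h_inj _ _ hinjB16 _ (fun ω => Prod.ext_iff.mpr ⟨by ring, rfl⟩)
  have b17f : Hent (pushf (blockPMF p12 p34 q1 q2 q1') (fun ω => (a3 * a1⁻¹ * ω.2.2.1 + ω.2.2.2.2, (ω.1.2, ω.2.1.2), ω.1.1, ω.2.1.1))) = Hent (pushf (blockPMF p12 p34 q1 q2 q1') (fun ω => a3 * a1⁻¹ * ω.2.2.1 + ω.2.2.2.2)) + Hent (pushf (blockPMF p12 p34 q1 q2 q1') (fun ω => ((ω.1.2, ω.2.1.2), ω.1.1, ω.2.1.1))) :=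
    h_indep _ (eSplit5 S1 S2 F) (fun nn : F × F => q1 nn.1 * q1' nn.2)
      (fun y => p12 y.1 * (p34 y.2.1 * q2 y.2.2)) hPN hR5
      (fun x => by simp only [blockPMF, eSplit5, Equiv.coe_fn_mk]; ring)
      (fun nn => a3 * a1⁻¹ * nn.1 + nn.2) (fun y => ((y.1.2, y.2.1.2), y.1.1, y.2.1.1))
      _ (fun x => rfl) _ (fun x => rfl) _ (fun x => rfl)
  have hinjF13 : Function.Injective (fun x : F × F × S1 × S2 =>
      ((x.2.1 - a3 * a1⁻¹ * x.1, x.1, x.2.2) : F × F × S1 × S2)) := by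
    intro x y h
    simp only [Prod.mk.injEq] at h
    obtain ⟨h1, hY, hW⟩ := h
    rw [hY] at h1
    exact Prod.ext_iff.mpr ⟨hY, Prod.ext_iff.mpr ⟨by linear_combination h1, hW⟩⟩
  have f13f : Hent (pushf (blockPMF p12 p34 q1 q2 q1') (fun ω => (ω.2.2.2.2, a1 * ω.1.2 + b1 * ω.2.1.2 + ω.2.2.1, ω.1.1, ω.2.1.1))) = Hent (pushf (blockPMF p12 p34 q1 q2 q1') (fun ω => (a1 * ω.1.2 + b1 * ω.2.1.2 + ω.2.2.1, a3 * ω.1.2 + (a3 * a1⁻¹ * b1) * ω.2.1.2 + (a3 * a1⁻¹ * ω.2.2.1 + ω.2.2.2.2), ω.1.1, ω.2.1.1))) :=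
    h_inj _ _ hinjF13 _
      (fun ω => Prod.ext_iff.mpr ⟨by linear_combination (a3 * ω.1.2) * inv_mul_cancel₀ ha1, rfl⟩)
  have f13bf : Hent (pushf (blockPMF p12 p34 q1 q2 q1') (fun ω => (ω.2.2.2.2, a1 * ω.1.2 + b1 * ω.2.1.2 + ω.2.2.1, ω.1.1, ω.2.1.1)))
      = Hent (pushf (blockPMF p12 p34 q1 q2 q1') (fun ω => ω.2.2.2.2)) + Hent (pushf (blockPMF p12 p34 q1 q2 q1') (fun ω => (a1 * ω.1.2 + b1 * ω.2.1.2 + ω.2.2.1, ω.1.1, ω.2.1.1))) :=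
    h_indep _ (eSplit4 S1 S2 F) q1'
      (fun y => p12 y.1 * (p34 y.2.1 * (q1 y.2.2.1 * q2 y.2.2.2))) hq1'.2 hR4
      (fun x => by simp only [blockPMF, eSplit4, Equiv.coe_fn_mk]; ring)
      (fun n => n) (fun y => (a1 * y.1.2 + b1 * y.2.1.2 + y.2.2.1, y.1.1, y.2.1.1))
      _ (fun x => rfl) _ (fun x => rfl) _ (fun x => rfl)
  have hinjF17 : Function.Injective (fun x : F × F =>
      ((x.1, x.2 - a3 * a1⁻¹ * x.1) : F × F)) := by
    intro x y h
    simp only [Prod.mk.injEq] at h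
    obtain ⟨h1, h2⟩ := h
    rw [h1] at h2
    exact Prod.ext_iff.mpr ⟨h1, by linear_combination h2⟩
  have f17bf : Hent (pushf (blockPMF p12 p34 q1 q2 q1') (fun ω => (ω.2.2.1, ω.2.2.2.2))) = Hent (pushf (blockPMF p12 p34 q1 q2 q1') (fun ω => (ω.2.2.1, a3 * a1⁻¹ * ω.2.2.1 + ω.2.2.2.2))) :=
    h_inj _ _ hinjF17 _ (fun ω => Prod.ext_iff.mpr ⟨rfl, by ring⟩)
  have f17cf : Hent (pushf (blockPMF p12 p34 q1 q2 q1') (fun ω => (ω.2.2.1, ω.2.2.2.2))) = Hent (pushf (blockPMF p12 p34 q1 q2 q1') (fun ω => ω.2.2.1)) + Hent (pushf (blockPMF p12 p34 q1 q2 q1') (fun ω => ω.2.2.2.2)) :=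
    h_indep _ (eSplit2 S1 S2 F) q1
      (fun y => q1' y.1 * (p12 y.2.1 * (p34 y.2.2.1 * q2 y.2.2.2))) hq1.2 hR2
      (fun x => by simp only [blockPMF, eSplit2, Equiv.coe_fn_mk]; ring)
      (fun n => n) (fun y => y.1)
      _ (fun x => rfl) _ (fun x => rfl) _ (fun x => rfl)
  linarith [ecmi2, ecmi1, emi, a1f, a2f, a3f, a4f, a5f, b1f, b2af, b2bf, b2cf, b5f,
    b6f, b7f, b13f, b14f, b15f, b16f, b17f, f13f, f13bf, f17bf, f17cf]
end

section
/- Let n > 0 and z ≥ 0 be real numbers, define g(x) := (n/2)·log(2πe·x/n) for x > 0, with inverse g⁻¹(y) = (n/(2πe))·e^{2y/n}, and set h(y, z) := g(z + g⁻¹(y)) − y. Then for every fixed z ≥ 0, the function y ↦ h(y, z) is nonincreasing on ℝ; that is, for all real y₁ ≤ y₂, h(y₂, z) ≤ h(y₁, z). -/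
/-- `g(x) = (n/2) log(2πe x / n)`. -/
noncomputable def gFun (n x : ℝ) : ℝ := (n / 2) * Real.log (2 * Real.pi * Real.exp 1 * x / n)

/-- The inverse of `g`: `g⁻¹(y) = (n/(2πe)) e^{2y/n}`. -/
noncomputable def gInv (n y : ℝ) : ℝ := (n / (2 * Real.pi * Real.exp 1)) * Real.exp (2 * y / n)

/-- `h(y,z) = g(z + g⁻¹(y)) − y`. -/
noncomputable def hFun (n y z : ℝ) : ℝ := gFun n (z + gInv n y) - y

lemma hFun_eq (n y z : ℝ) (hn : 0 < n) (hz : 0 ≤ z) :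
    hFun n y z = (n / 2) *
      Real.log (1 + (2 * Real.pi * Real.exp 1 * z / n) * Real.exp (-(2 * y / n))) := by
  have hc : (0:ℝ) < 2 * Real.pi * Real.exp 1 := by positivity
  have hE : (0:ℝ) < Real.exp (2 * y / n) := Real.exp_pos _
  have key : 2 * Real.pi * Real.exp 1 * (z + gInv n y) / n
      = Real.exp (2 * y / n) *
        (1 + (2 * Real.pi * Real.exp 1 * z / n) * Real.exp (-(2 * y / n))) := by
    rw [Real.exp_neg]
    unfold gInv
    field_simp
    ring
  unfold hFun gFun
  rw [key, Real.log_mul (ne_of_gt hE) ?pos, Real.log_exp]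
  · field_simp
    ring
  case pos => positivity

/-- for fixed `z ≥ 0`, the map `y ↦ h(y,z)` is nonincreasing on ℝ. -/
theorem hFun_antitone (n z : ℝ) (hn : 0 < n) (hz : 0 ≤ z) :
    ∀ y₁ y₂ : ℝ, y₁ ≤ y₂ → hFun n y₂ z ≤ hFun n y₁ z := by
  intro y₁ y₂ hy
  rw [hFun_eq n y₁ z hn hz, hFun_eq n y₂ z hn hz]
  have hb : (0:ℝ) ≤ 2 * Real.pi * Real.exp 1 * z / n := by positivity
  have hexp : Real.exp (-(2 * y₂ / n)) ≤ Real.exp (-(2 * y₁ / n)) := by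
    apply Real.exp_le_exp.2
    have : 2 * y₁ / n ≤ 2 * y₂ / n := by gcongr ?_ / n; linarith
    linarith
  have h1 : (0:ℝ) < 1 + (2 * Real.pi * Real.exp 1 * z / n) * Real.exp (-(2 * y₂ / n)) := by
    have := mul_nonneg hb (Real.exp_pos (-(2 * y₂ / n))).le
    linarith
  have hle : 1 + (2 * Real.pi * Real.exp 1 * z / n) * Real.exp (-(2 * y₂ / n))
      ≤ 1 + (2 * Real.pi * Real.exp 1 * z / n) * Real.exp (-(2 * y₁ / n)) := by
    have := mul_le_mul_of_nonneg_left hexp hb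
    linarith
  have hlog := Real.log_le_log h1 hle
  have hn2 : (0:ℝ) ≤ n / 2 := by positivity
  exact mul_le_mul_of_nonneg_left hlog hn2
end
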